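/- The Demazure–Lusztig operators are well defined on L (for every f ∈ L and i = 0, 1, the element f − s_i(f) is divisible by 1 − 𝕏_i² in L) and satisfy (Û_i − u_i^{1/2})(Û_i + u_i^{−1/2}) = 0 on L. The operator Û_i' := u_i^{−1/2}·s_i + ((u_i^{1/2} − u_i^{−1/2})·𝕏_i² + (v_i^{1/2} − v_i^{−1/2})·𝕏_i)·(1 − s_i)/(1 − 𝕏_i²) is a two-sided inverse of Û_i. Defining V̂₁(f) = Û₁'(𝕏⁻¹·f) and V̂₀(f) = q^{−1/4}·𝕏·Û₀'(f), one has (V̂_i − v_i^{1/2})(V̂_i + v_i^{−1/2}) = 0 for i = 0, 1 and q^{1/4}·V̂₁ ∘ V̂₀ ∘ Û₀ ∘ Û₁ = id. Consequently there is an R-algebra homomorphism from H to the R-algebra of R-linear endomorphisms of L sending U_i ↦ Û_i and V_i ↦ V̂_i, and under this homomorphism the element 𝕏 = V₁⁻¹·U₁⁻¹ of H acts as multiplication by 𝕏. -/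

import Mathlib

noncomputable section

/-- The base ring `R = ℤ[q^{±1/4}, u₀^{±1/2}, u₁^{±1/2}, v₀^{±1/2}, v₁^{±1/2}]`:
the group algebra over `ℤ` of the free abelian group on five generators, where the
exponents record the variables `(q^{1/4}, u₀^{1/2}, u₁^{1/2}, v₀^{1/2}, v₁^{1/2})`. -/
abbrev R5 : Type := AddMonoidAlgebra ℤ (ℤ × ℤ × ℤ × ℤ × ℤ)

namespace R5
/-- `q^{1/4}` -/
def q4 : R5 := AddMonoidAlgebra.single (1, 0, 0, 0, 0) 1
/-- `q^{-1/4}` -/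
def q4i : R5 := AddMonoidAlgebra.single (-1, 0, 0, 0, 0) 1
/-- `u₀^{1/2}` -/
def u0h : R5 := AddMonoidAlgebra.single (0, 1, 0, 0, 0) 1
def u0hi : R5 := AddMonoidAlgebra.single (0, -1, 0, 0, 0) 1
/-- `u₁^{1/2}` -/
def u1h : R5 := AddMonoidAlgebra.single (0, 0, 1, 0, 0) 1
def u1hi : R5 := AddMonoidAlgebra.single (0, 0, -1, 0, 0) 1
/-- `v₀^{1/2}` -/
def v0h : R5 := AddMonoidAlgebra.single (0, 0, 0, 1, 0) 1
def v0hi : R5 := AddMonoidAlgebra.single (0, 0, 0, -1, 0) 1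
/-- `v₁^{1/2}` -/
def v1h : R5 := AddMonoidAlgebra.single (0, 0, 0, 0, 1) 1
def v1hi : R5 := AddMonoidAlgebra.single (0, 0, 0, 0, -1) 1
end R5

/-- Generators `U₀, U₁, V₀, V₁` of the `C∨C₁` DAHA. -/
inductive Cgen : Type
  | u0 | u1 | v0 | v1

open FreeAlgebra in
/-- The defining relations of the DAHA of type `C∨C₁`:
`(U_i − u_i^{1/2})(U_i + u_i^{−1/2}) = 0`, `(V_i − v_i^{1/2})(V_i + v_i^{−1/2}) = 0`
for `i = 0, 1`, and `q^{1/4}·V₁·V₀·U₀·U₁ = 1`. -/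
inductive Crel : FreeAlgebra R5 Cgen → FreeAlgebra R5 Cgen → Prop
  | heckeU0 : Crel ((ι R5 Cgen.u0 - algebraMap R5 _ R5.u0h) *
      (ι R5 Cgen.u0 + algebraMap R5 _ R5.u0hi)) 0
  | heckeU1 : Crel ((ι R5 Cgen.u1 - algebraMap R5 _ R5.u1h) *
      (ι R5 Cgen.u1 + algebraMap R5 _ R5.u1hi)) 0
  | heckeV0 : Crel ((ι R5 Cgen.v0 - algebraMap R5 _ R5.v0h) *
      (ι R5 Cgen.v0 + algebraMap R5 _ R5.v0hi)) 0
  | heckeV1 : Crel ((ι R5 Cgen.v1 - algebraMap R5 _ R5.v1h) *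
      (ι R5 Cgen.v1 + algebraMap R5 _ R5.v1hi)) 0
  | unit : Crel (algebraMap R5 _ R5.q4 * ι R5 Cgen.v1 * ι R5 Cgen.v0 *
      ι R5 Cgen.u0 * ι R5 Cgen.u1) 1

/-- The DAHA of type `C∨C₁`. -/
abbrev H : Type := RingQuot Crel

namespace H

def U0 : H := RingQuot.mkAlgHom R5 Crel (FreeAlgebra.ι R5 Cgen.u0)
def U1 : H := RingQuot.mkAlgHom R5 Crel (FreeAlgebra.ι R5 Cgen.u1)
def V0 : H := RingQuot.mkAlgHom R5 Crel (FreeAlgebra.ι R5 Cgen.v0)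
def V1 : H := RingQuot.mkAlgHom R5 Crel (FreeAlgebra.ι R5 Cgen.v1)

/-- image of a base-ring element in `H` -/
def c (r : R5) : H := algebraMap R5 H r

/-- `U₀⁻¹ = U₀ − u₀^{1/2} + u₀^{−1/2}` -/
def U0i : H := U0 - c R5.u0h + c R5.u0hi
/-- `U₁⁻¹ = U₁ − u₁^{1/2} + u₁^{−1/2}` -/
def U1i : H := U1 - c R5.u1h + c R5.u1hi
/-- `V₀⁻¹ = V₀ − v₀^{1/2} + v₀^{−1/2}` -/
def V0i : H := V0 - c R5.v0h + c R5.v0hi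
/-- `V₁⁻¹ = V₁ − v₁^{1/2} + v₁^{−1/2}` -/
def V1i : H := V1 - c R5.v1h + c R5.v1hi
/-- `𝕏 = V₁⁻¹·U₁⁻¹` -/
def XX : H := V1i * U1i
/-- `𝕏⁻¹ = U₁·V₁` -/
def XXi : H := U1 * V1
/-- `𝕐 = U₀·U₁` -/
def YY : H := U0 * U1
/-- `𝕐⁻¹ = U₁⁻¹·U₀⁻¹` -/
def YYi : H := U1i * U0i

end H

open H

/-- `φ : H → H'` is semilinear over `θ : R → R` -/
def Semilin (θ : R5 ≃+* R5) (f : H → H) : Prop :=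
  ∀ r : R5, f (algebraMap R5 H r) = algebraMap R5 H (θ r)

open LaurentPolynomial in
/-- The polynomial representation space `L = R[𝕏^{±1}]`. -/
abbrev L : Type := LaurentPolynomial R5

/-- `q^{n/4} ∈ R` -/
def R5.qpow (n : ℤ) : R5 := AddMonoidAlgebra.single (n, 0, 0, 0, 0) 1

/-- `𝕏₀ = q^{1/4}·𝕏⁻¹` and `𝕏₁ = 𝕏` -/
def Xl : Fin 2 → L :=
  ![LaurentPolynomial.C R5.q4 * LaurentPolynomial.T (-1), LaurentPolynomial.T 1]

def uh : Fin 2 → R5 := ![R5.u0h, R5.u1h]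
def uhi : Fin 2 → R5 := ![R5.u0hi, R5.u1hi]
def vh : Fin 2 → R5 := ![R5.v0h, R5.v1h]
def vhi : Fin 2 → R5 := ![R5.v0hi, R5.v1hi]

/-- defining property of the operators `s₁, s₀`:
`s₁(𝕏^m) = 𝕏^{−m}` and `s₀(𝕏^m) = q^{m/2}·𝕏^{−m}`. -/
def Sconds (s : Fin 2 → Module.End R5 L) : Prop :=
  (∀ m : ℤ, s 1 (LaurentPolynomial.T m) = LaurentPolynomial.T (-m)) ∧
  (∀ m : ℤ, s 0 (LaurentPolynomial.T m) =
    LaurentPolynomial.C (R5.qpow (2 * m)) * LaurentPolynomial.T (-m))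

/-- defining property of the Demazure–Lusztig operators `Û_i`:
`Û_i(f) = u_i^{1/2}·s_i(f) + ((u_i^{1/2} − u_i^{−1/2}) + (v_i^{1/2} − v_i^{−1/2})·𝕏_i)·g`
whenever `(1 − 𝕏_i²)·g = f − s_i(f)`. -/
def Uconds (s U : Fin 2 → Module.End R5 L) : Prop :=
  ∀ (i : Fin 2) (f g : L), (1 - Xl i ^ 2) * g = f - s i f →
    U i f = uh i • s i f +
      (LaurentPolynomial.C (uh i - uhi i) + LaurentPolynomial.C (vh i - vhi i) * Xl i) * g

/-- defining property of the inverse operators `Û_i'`: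
`Û_i'(f) = u_i^{−1/2}·s_i(f) + ((u_i^{1/2} − u_i^{−1/2})·𝕏_i² + (v_i^{1/2} − v_i^{−1/2})·𝕏_i)·g`
whenever `(1 − 𝕏_i²)·g = f − s_i(f)`. -/
def U'conds (s U' : Fin 2 → Module.End R5 L) : Prop :=
  ∀ (i : Fin 2) (f g : L), (1 - Xl i ^ 2) * g = f - s i f →
    U' i f = uhi i • s i f +
      (LaurentPolynomial.C (uh i - uhi i) * Xl i ^ 2 +
        LaurentPolynomial.C (vh i - vhi i) * Xl i) * g


/-!
Each `s_i` is an `R`-algebra involution with `s_i(𝕏_i) = 𝕏_i⁻¹`, and `𝕏_i, 𝕏_i⁻¹` generate `L`.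
The elements `p` with `1 - 𝕏_i² ∣ p - s_i p` form a subalgebra containing `𝕏_i` and `𝕏_i⁻¹`,
hence all of `L`; as `1 - 𝕏_i²` is a non-zero-divisor, the divided difference
`δ p = (p - s_i p)/(1 - 𝕏_i²)` is a well-defined linear map. All relations then become polynomial
identities in `p, s_i p, δ p`, checked using `s_i(δ p) = 𝕏_i² δ p` and the formulas for `δ` of
`Û p`, `Û' p` and `𝕏⁻¹ p`. The operator `𝕏⁻¹ ∘ Û'` is conjugate to `Û' ∘ 𝕏⁻¹`, so both `V̂`'s
satisfy the same quadratic relation; `V̂₀ Û₀ = 𝕏₀⁻¹` and `𝕏₁⁻¹ 𝕏₀⁻¹ = q^{-1/4}` give the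
product relation. Finally `𝕏 = V₁⁻¹U₁⁻¹` is inverse to `U₁V₁`, which acts as
`Û₁ Û₁' 𝕏⁻¹ = 𝕏⁻¹`.
-/

open LaurentPolynomial

lemma Module.End.hecke_of_apply {R M : Type*} [CommRing R] [AddCommGroup M] [Module R M]
    {F : Module.End R M} {a b : R} (hab : a * b = 1) (h : ∀ p, F (F p) = (a - b) • F p + p) :
    (F - a • 1) * (F + b • 1) = 0 := by
  ext p
  simp only [Module.End.mul_apply, LinearMap.sub_apply, LinearMap.add_apply, LinearMap.smul_apply,
    Module.End.one_apply, map_add, map_smul, h, LinearMap.zero_apply]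
  linear_combination (norm := module) -(hab • p)

lemma inv_mul_of_hecke {R B : Type*} [CommRing R] [Ring B] [Algebra R B] {w : B} {a b : R}
    (hab : a * b = 1) (h : (w - algebraMap R B a) * (w + algebraMap R B b) = 0) :
    (w - algebraMap R B a + algebraMap R B b) * w = 1 := by
  calc (w - algebraMap R B a + algebraMap R B b) * w
      = (w - algebraMap R B a) * (w + algebraMap R B b) + algebraMap R B (b * a) := by
        rw [map_mul, mul_add, ← Algebra.commutes b (w - _)]; noncomm_ring
    _ = 1 := by rw [h, mul_comm, hab, map_one, zero_add]

lemma one_sub_sq_dvd_sub_of_mem_adjoin {R A : Type*} [CommRing R] [CommRing A] [Algebra R A]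
    {σ : A →ₐ[R] A} {x y : A} (hxy : x * y = 1) (hx : σ x = y) (hy : σ y = x) {p : A}
    (hp : p ∈ Algebra.adjoin R {x, y}) : 1 - x ^ 2 ∣ p - σ p := by
  induction hp using Algebra.adjoin_induction with
  | mem p hp =>
    obtain rfl | rfl : x = p ∨ y = p := by simpa [eq_comm] using hp
    · exact ⟨-y, by rw [hx]; linear_combination (-x) * hxy⟩
    · exact ⟨y, by rw [hy]; linear_combination x * hxy⟩
  | algebraMap r => simp
  | add p q _ _ hp hq => simpa only [map_add, add_sub_add_comm] using dvd_add hp hq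
  | mul p q _ _ hp hq =>
    have h : p * q - σ (p * q) = p * (q - σ q) + σ q * (p - σ p) := by rw [map_mul]; ring
    exact h ▸ dvd_add (dvd_mul_of_dvd_right hq _) (dvd_mul_of_dvd_right hp _)

lemma LaurentPolynomial.linearMap_ext {R M : Type*} [CommSemiring R] [AddCommMonoid M]
    [Module R M] {f g : R[T;T⁻¹] →ₗ[R] M} (h : ∀ n, f (T n) = g (T n)) : f = g := by
  refine LinearMap.ext fun p => ?_
  induction p using LaurentPolynomial.induction_on' with
  | add p q hp hq => rw [map_add, map_add, hp, hq]
  | C_mul_T n a => rw [← smul_eq_C_mul, map_smul, map_smul, h]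

lemma LaurentPolynomial.eq_top_of_T_mem {R : Type*} [CommSemiring R] {S : Subalgebra R R[T;T⁻¹]}
    (h₁ : T 1 ∈ S) (h₂ : T (-1) ∈ S) : S = ⊤ := by
  refine Algebra.eq_top_iff.mpr fun p => ?_
  induction p using LaurentPolynomial.induction_on' with
  | add p q hp hq => exact S.add_mem hp hq
  | C_mul_T n a =>
    refine S.mul_mem (by rw [C_eq_algebraMap]; exact S.algebraMap_mem a) ?_
    obtain ⟨k, rfl | rfl⟩ := n.eq_nat_or_neg
    · simpa [T_pow] using S.pow_mem h₁ k
    · simpa [T_pow] using S.pow_mem h₂ k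

lemma LaurentPolynomial.one_sub_C_mul_T_ne_zero {R : Type*} [Ring R] [Nontrivial R] (r : R)
    {k : ℤ} (hk : k ≠ 0) : (1 : R[T;T⁻¹]) - C r * T k ≠ 0 := by
  intro h
  have h1 : (AddMonoidAlgebra.single 0 1 : R[T;T⁻¹]) = AddMonoidAlgebra.single k r := by
    rw [single_eq_C_mul_T r k, ← sub_eq_zero.mp h]; rfl
  rcases AddMonoidAlgebra.single_inj.mp h1 with ⟨h3, _⟩ | ⟨h3, _⟩
  · exact hk h3.symm
  · exact one_ne_zero h3

/-- The parameters `t, ti, c, ci` stand for `u^{1/2}, u^{-1/2}, v^{1/2}, v^{-1/2}`. -/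
structure DemazureLusztigData (R A : Type*) [CommRing R] [CommRing A] [Algebra R A] where
  σ : A →ₐ[R] A
  σ_σ : ∀ p, σ (σ p) = p
  X : A
  Xinv : A
  X_mul_Xinv : X * Xinv = 1
  σ_X : σ X = Xinv
  isLeftRegular : IsLeftRegular (1 - X ^ 2)
  adjoin_eq_top : Algebra.adjoin R {X, Xinv} = ⊤
  t : R
  ti : R
  c : R
  ci : R
  t_mul_ti : t * ti = 1
  c_mul_ci : c * ci = 1

namespace DemazureLusztigData

variable {R A : Type*} [CommRing R] [CommRing A] [Algebra R A] (D : DemazureLusztigData R A)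

local notation "τ" => algebraMap R A D.t
local notation "τ'" => algebraMap R A D.ti
local notation "γ" => algebraMap R A D.c
local notation "γ'" => algebraMap R A D.ci

lemma τ_mul_τ' : τ * τ' = 1 := by rw [← map_mul, D.t_mul_ti, map_one]

lemma σ_Xinv : D.σ D.Xinv = D.X := by rw [← D.σ_X, D.σ_σ]

lemma dvd_sub_σ (p : A) : 1 - D.X ^ 2 ∣ p - D.σ p :=
  one_sub_sq_dvd_sub_of_mem_adjoin D.X_mul_Xinv D.σ_X D.σ_Xinv (D.adjoin_eq_top ▸ trivial)

lemma cancel {a b : A} (h : (1 - D.X ^ 2) * a = (1 - D.X ^ 2) * b) : a = b :=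
  D.isLeftRegular h

/-- The divided difference `(p - σ p) / (1 - X²)`. -/
def δ : A →ₗ[R] A where
  toFun p := (D.dvd_sub_σ p).choose
  map_add' p q := D.cancel <| by
    rw [mul_add, ← (D.dvd_sub_σ _).choose_spec, ← (D.dvd_sub_σ _).choose_spec,
      ← (D.dvd_sub_σ _).choose_spec, map_add]
    ring
  map_smul' r p := D.cancel <| by
    rw [RingHom.id_apply, mul_smul_comm, ← (D.dvd_sub_σ _).choose_spec,
      ← (D.dvd_sub_σ _).choose_spec, map_smul, smul_sub]

lemma one_sub_X_sq_mul_δ (p : A) : (1 - D.X ^ 2) * D.δ p = p - D.σ p :=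
  (D.dvd_sub_σ p).choose_spec.symm

lemma eq_δ {p g : A} (h : (1 - D.X ^ 2) * g = p - D.σ p) : g = D.δ p :=
  D.cancel (h.trans (D.one_sub_X_sq_mul_δ p).symm)

lemma existsUnique_δ (p : A) : ∃! g, (1 - D.X ^ 2) * g = p - D.σ p :=
  ⟨D.δ p, D.one_sub_X_sq_mul_δ p, fun _ => D.eq_δ⟩

lemma forall_one_sub_X_sq_mul_eq_iff {P : A → A → Prop} :
    (∀ p g, (1 - D.X ^ 2) * g = p - D.σ p → P p g) ↔ ∀ p, P p (D.δ p) :=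
  ⟨fun h p => h p _ (D.one_sub_X_sq_mul_δ p), fun h p _ hg => D.eq_δ hg ▸ h p⟩

lemma σ_δ (p : A) : D.σ (D.δ p) = D.X ^ 2 * D.δ p := by
  apply D.cancel
  have h := congrArg D.σ (D.one_sub_X_sq_mul_δ p)
  simp only [map_mul, map_sub, map_one, map_pow, D.σ_X, D.σ_σ] at h
  linear_combination (-D.X ^ 2) * h + (-D.X ^ 2) * D.one_sub_X_sq_mul_δ p -
    ((D.X * D.Xinv + 1) * D.σ (D.δ p)) * D.X_mul_Xinv

lemma δ_Xinv_mul (p : A) : D.δ (D.Xinv * p) = D.Xinv * D.σ p + D.Xinv * D.δ p := by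
  apply D.cancel
  rw [D.one_sub_X_sq_mul_δ, map_mul, D.σ_Xinv]
  linear_combination (D.X ^ 2 * D.Xinv - D.Xinv - D.X) * D.one_sub_X_sq_mul_δ p +
    (D.δ p * (D.X ^ 3 - D.X) + p * D.X) * D.X_mul_Xinv

def U : Module.End R A :=
  D.t • D.σ.toLinearMap +
    LinearMap.mulLeft R (algebraMap R A (D.t - D.ti) + algebraMap R A (D.c - D.ci) * D.X) ∘ₗ D.δ

def U' : Module.End R A :=
  D.ti • D.σ.toLinearMap +
    LinearMap.mulLeft R
      (algebraMap R A (D.t - D.ti) * D.X ^ 2 + algebraMap R A (D.c - D.ci) * D.X) ∘ₗ D.δ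

lemma U_apply (p : A) : D.U p = D.t • D.σ p +
    (algebraMap R A (D.t - D.ti) + algebraMap R A (D.c - D.ci) * D.X) * D.δ p := rfl

lemma U'_apply (p : A) : D.U' p = D.ti • D.σ p +
    (algebraMap R A (D.t - D.ti) * D.X ^ 2 + algebraMap R A (D.c - D.ci) * D.X) * D.δ p := rfl

lemma U_apply' (p : A) : D.U p = τ * D.σ p + (τ - τ' + (γ - γ') * D.X) * D.δ p := by
  rw [U_apply, Algebra.smul_def, map_sub, map_sub]

lemma U'_apply' (p : A) :
    D.U' p = τ' * D.σ p + ((τ - τ') * D.X ^ 2 + (γ - γ') * D.X) * D.δ p := by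
  rw [U'_apply, Algebra.smul_def, map_sub, map_sub]

lemma σ_U (p : A) : D.σ (D.U p) = τ * p + ((τ - τ') * D.X ^ 2 + (γ - γ') * D.X) * D.δ p := by
  rw [U_apply']
  simp only [map_add, map_mul, map_sub, AlgHom.commutes, D.σ_σ, D.σ_X, D.σ_δ]
  linear_combination ((γ - γ') * D.X * D.δ p) * D.X_mul_Xinv

lemma δ_U (p : A) : D.δ (D.U p) = -(τ' * D.δ p) := by
  apply D.cancel
  rw [D.one_sub_X_sq_mul_δ, D.σ_U, U_apply']
  linear_combination τ * D.one_sub_X_sq_mul_δ p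

lemma σ_U' (p : A) : D.σ (D.U' p) = τ' * p + (τ - τ' + (γ - γ') * D.X) * D.δ p := by
  rw [U'_apply']
  simp only [map_add, map_mul, map_sub, map_pow, AlgHom.commutes, D.σ_σ, D.σ_X, D.σ_δ]
  linear_combination (D.δ p * ((τ - τ') * (1 + D.X * D.Xinv) + (γ - γ') * D.X)) * D.X_mul_Xinv

lemma δ_U' (p : A) : D.δ (D.U' p) = -(τ * D.δ p) := by
  apply D.cancel
  rw [D.one_sub_X_sq_mul_δ, D.σ_U', U'_apply']
  linear_combination τ' * D.one_sub_X_sq_mul_δ p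

lemma U_U (p : A) : D.U (D.U p) = (D.t - D.ti) • D.U p + p := by
  rw [Algebra.smul_def, map_sub, D.U_apply' (D.U p), D.σ_U, D.δ_U, U_apply']
  linear_combination (τ * τ' - τ ^ 2) * D.one_sub_X_sq_mul_δ p + p * D.τ_mul_τ'

lemma U'_U (p : A) : D.U' (D.U p) = p := by
  rw [D.U'_apply' (D.U p), D.σ_U, D.δ_U]
  linear_combination p * D.τ_mul_τ'

lemma U_U' (p : A) : D.U (D.U' p) = p := by
  rw [D.U_apply' (D.U' p), D.σ_U', D.δ_U']
  linear_combination p * D.τ_mul_τ'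

def V : Module.End R A := D.U' * LinearMap.mulLeft R D.Xinv

lemma V_apply (p : A) : D.V p = D.U' (D.Xinv * p) := rfl

lemma V_apply' (p : A) :
    D.V p = (τ * D.X + (γ - γ')) * D.σ p + ((τ - τ') * D.X + (γ - γ')) * D.δ p := by
  rw [V_apply, U'_apply', map_mul, D.σ_Xinv, D.δ_Xinv_mul]
  linear_combination
    (γ' - γ + D.X * (τ' - τ) + D.X * D.Xinv * (γ - γ') + D.X ^ 2 * D.Xinv * (τ - τ')) *
      D.one_sub_X_sq_mul_δ p +
    (D.δ p * (D.X ^ 2 * (γ - γ') + D.X ^ 3 * (τ - τ')) + p * (γ - γ' + D.X * (τ - τ'))) *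
      D.X_mul_Xinv

lemma σ_V (p : A) : D.σ (D.V p) =
    (τ * D.Xinv + (γ - γ')) * p + ((τ - τ') * D.X + (γ - γ') * D.X ^ 2) * D.δ p := by
  rw [V_apply']
  simp only [map_add, map_mul, map_sub, AlgHom.commutes, D.σ_σ, D.σ_X, D.σ_δ]
  linear_combination ((τ - τ') * D.X * D.δ p) * D.X_mul_Xinv

lemma δ_V (p : A) : D.δ (D.V p) = -(τ * D.Xinv) * D.σ p - τ * D.Xinv * D.δ p := by
  apply D.cancel
  rw [D.one_sub_X_sq_mul_δ, D.σ_V, V_apply']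
  linear_combination (γ - γ' + τ * (D.Xinv + D.X - D.X ^ 2 * D.Xinv)) * D.one_sub_X_sq_mul_δ p +
    (D.δ p * (D.X - D.X ^ 3) * τ - p * D.X * τ) * D.X_mul_Xinv

lemma V_V (p : A) : D.V (D.V p) = (D.c - D.ci) • D.V p + p := by
  rw [Algebra.smul_def, map_sub, D.V_apply (D.V p), U'_apply', map_mul, D.σ_Xinv,
    D.δ_Xinv_mul, D.σ_V, D.δ_V, V_apply']
  linear_combination
    (-(γ - γ') ^ 2 - τ * (γ - γ') * D.X - τ * (γ - γ') * D.X * D.Xinv ^ 2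
      - τ * (τ - τ') * D.X ^ 2 * D.Xinv ^ 2) * D.one_sub_X_sq_mul_δ p +
    (D.δ p * (-(D.X * τ' * (γ - γ')) + D.X ^ 2 * (γ - γ') ^ 2
        - D.X ^ 2 * τ' * (τ - τ') - D.X ^ 2 * D.Xinv * τ * (γ - γ')
        - D.X ^ 3 * τ' * (γ - γ') + D.X ^ 3 * τ * (γ - γ')
        - D.X ^ 3 * D.Xinv * τ * (τ - τ')) +
      p * ((γ - γ') ^ 2 + τ * τ' - D.X * τ' * (γ - γ') + D.X * τ * (γ - γ'))) * D.X_mul_Xinv +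
    p * D.τ_mul_τ'

def W : Module.End R A := LinearMap.mulLeft R D.Xinv * D.U'

lemma W_apply (p : A) : D.W p = D.Xinv * D.U' p := rfl

lemma W_W (p : A) : D.W (D.W p) = (D.c - D.ci) • D.W p + p := by
  have hp : p = D.Xinv * (D.X * p) := by linear_combination (-p) * D.X_mul_Xinv
  have hW (q : A) : D.W (D.Xinv * q) = D.Xinv * D.V q := rfl
  rw [hp, hW, hW, D.V_V, mul_add, mul_smul_comm]

lemma hecke_U : (D.U - D.t • 1) * (D.U + D.ti • 1) = 0 :=
  Module.End.hecke_of_apply D.t_mul_ti D.U_U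

lemma hecke_V : (D.V - D.c • 1) * (D.V + D.ci • 1) = 0 :=
  Module.End.hecke_of_apply D.c_mul_ci D.V_V

lemma hecke_W : (D.W - D.c • 1) * (D.W + D.ci • 1) = 0 :=
  Module.End.hecke_of_apply D.c_mul_ci D.W_W

lemma U'_mul_U : D.U' * D.U = 1 := LinearMap.ext D.U'_U

lemma U_mul_U' : D.U * D.U' = 1 := LinearMap.ext D.U_U'

lemma U_mul_V : D.U * D.V = LinearMap.mulLeft R D.Xinv := by
  rw [V, ← mul_assoc, U_mul_U', one_mul]

lemma mulLeft_Xinv_mul_mulLeft_X : LinearMap.mulLeft R D.Xinv * LinearMap.mulLeft R D.X = 1 := by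
  rw [Module.End.mul_eq_comp, ← LinearMap.mulLeft_mul, mul_comm, D.X_mul_Xinv,
    LinearMap.mulLeft_one, Module.End.one_eq_id]

end DemazureLusztigData

namespace R5

lemma single_mul_single_neg (a : ℤ × ℤ × ℤ × ℤ × ℤ) :
    (AddMonoidAlgebra.single a 1 : R5) * AddMonoidAlgebra.single (-a) 1 = 1 := by
  rw [AddMonoidAlgebra.single_mul_single, add_neg_cancel, mul_one]; rfl

lemma q4_mul_q4i : q4 * q4i = 1 := single_mul_single_neg _
lemma u0h_mul_u0hi : u0h * u0hi = 1 := single_mul_single_neg _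
lemma u1h_mul_u1hi : u1h * u1hi = 1 := single_mul_single_neg _
lemma v0h_mul_v0hi : v0h * v0hi = 1 := single_mul_single_neg _
lemma v1h_mul_v1hi : v1h * v1hi = 1 := single_mul_single_neg _

lemma qpow_add (a b : ℤ) : qpow a * qpow b = qpow (a + b) := by
  simp [qpow, AddMonoidAlgebra.single_mul_single]

lemma qpow_zero : qpow 0 = 1 := rfl

end R5

namespace H

lemma U1i_mul_U1 : U1i * U1 = 1 := by
  have h := RingQuot.mkAlgHom_rel R5 Crel.heckeU1
  simp only [map_mul, map_sub, map_add, AlgHom.commutes, map_zero] at h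
  exact inv_mul_of_hecke (B := H) (w := U1) R5.u1h_mul_u1hi h

lemma V1i_mul_V1 : V1i * V1 = 1 := by
  have h := RingQuot.mkAlgHom_rel R5 Crel.heckeV1
  simp only [map_mul, map_sub, map_add, AlgHom.commutes, map_zero] at h
  exact inv_mul_of_hecke (B := H) (w := V1) R5.v1h_mul_v1hi h

lemma XX_mul_XXi : XX * XXi = 1 := by
  rw [XX, XXi, mul_assoc, ← mul_assoc U1i, U1i_mul_U1, one_mul, V1i_mul_V1]

theorem exists_algHom {B : Type*} [Ring B] [Algebra R5 B] (u0 u1 v0 v1 : B)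
    (hu0 : (u0 - R5.u0h • 1) * (u0 + R5.u0hi • 1) = 0)
    (hu1 : (u1 - R5.u1h • 1) * (u1 + R5.u1hi • 1) = 0)
    (hv0 : (v0 - R5.v0h • 1) * (v0 + R5.v0hi • 1) = 0)
    (hv1 : (v1 - R5.v1h • 1) * (v1 + R5.v1hi • 1) = 0)
    (hq : R5.q4 • (v1 * v0 * u0 * u1) = 1) :
    ∃ Φ : H →ₐ[R5] B, Φ U0 = u0 ∧ Φ U1 = u1 ∧ Φ V0 = v0 ∧ Φ V1 = v1 := by
  let gen : Cgen → B
    | .u0 => u0 | .u1 => u1 | .v0 => v0 | .v1 => v1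
  have hrel : ∀ ⦃x y⦄, Crel x y → FreeAlgebra.lift R5 gen x = FreeAlgebra.lift R5 gen y := by
    intro x y h
    cases h <;> simpa [Algebra.algebraMap_eq_smul_one, gen, ← mul_assoc]
  refine ⟨RingQuot.liftAlgHom R5 ⟨FreeAlgebra.lift R5 gen, hrel⟩, ?_, ?_, ?_, ?_⟩ <;>
    simp [U0, U1, V0, V1, gen]

end H

def σ0 : L →ₐ[R5] L := AddMonoidAlgebra.lift R5 L ℤ
  { toFun m := C (R5.qpow (2 * m.toAdd)) * T (-m.toAdd)
    map_one' := by simp [R5.qpow_zero]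
    map_mul' x y := by
      simp only [toAdd_mul, neg_add, T_add, mul_add, ← R5.qpow_add, map_mul]
      ring }

lemma σ0_T (m : ℤ) : σ0 (T m) = C (R5.qpow (2 * m)) * T (-m) :=
  AddMonoidAlgebra.lift_single _ m (1 : R5) |>.trans (one_smul _ _)

lemma σ0_C (r : R5) : σ0 (C r) = C r := by
  rw [C_eq_algebraMap, AlgHom.commutes]

lemma σ0_σ0 (p : L) : σ0 (σ0 p) = p := by
  refine LinearMap.congr_fun (linearMap_ext (f := σ0.toLinearMap ∘ₗ σ0.toLinearMap)
    (g := LinearMap.id) fun m => ?_) p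
  show σ0 (σ0 (T m)) = T m
  rw [σ0_T, map_mul, σ0_T, σ0_C, ← mul_assoc, ← map_mul, R5.qpow_add, neg_neg,
    show 2 * m + 2 * -m = 0 by ring, R5.qpow_zero, map_one, one_mul]

def datum0 : DemazureLusztigData R5 L where
  σ := σ0
  σ_σ := σ0_σ0
  X := C R5.q4 * T (-1)
  Xinv := C R5.q4i * T 1
  X_mul_Xinv := by
    rw [mul_mul_mul_comm, ← map_mul, ← T_add, R5.q4_mul_q4i, map_one, neg_add_cancel, T_zero,
      one_mul]
  σ_X := by
    rw [map_mul, σ0_C, σ0_T, ← mul_assoc, ← map_mul, neg_neg]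
    exact congrArg (C · * T 1) (R5.qpow_add 1 (2 * -1))
  isLeftRegular := by
    refine IsLeftCancelMulZero.mul_left_cancel_of_ne_zero ?_
    rw [mul_pow, ← map_pow, T_pow, sq, show R5.q4 = R5.qpow 1 from rfl, R5.qpow_add]
    exact one_sub_C_mul_T_ne_zero _ (by norm_num)
  adjoin_eq_top := by
    set S := Algebra.adjoin R5 {(C R5.q4 * T (-1) : L), C R5.q4i * T 1}
    have hX : C R5.q4 * T (-1) ∈ S := Algebra.subset_adjoin (Set.mem_insert _ _)
    have hXinv : C R5.q4i * T 1 ∈ S := Algebra.subset_adjoin (Set.mem_insert_of_mem _ rfl)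
    refine eq_top_of_T_mem ?_ ?_
    · convert S.mul_mem (S.algebraMap_mem R5.q4) hXinv using 1
      rw [← C_eq_algebraMap, ← mul_assoc, ← map_mul, R5.q4_mul_q4i, map_one, one_mul]
    · convert S.mul_mem (S.algebraMap_mem R5.q4i) hX using 1
      rw [← C_eq_algebraMap, ← mul_assoc, ← map_mul, mul_comm R5.q4i, R5.q4_mul_q4i, map_one,
        one_mul]
  t := R5.u0h
  ti := R5.u0hi
  c := R5.v0h
  ci := R5.v0hi
  t_mul_ti := R5.u0h_mul_u0hi
  c_mul_ci := R5.v0h_mul_v0hi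

def datum1 : DemazureLusztigData R5 L where
  σ := invert.toAlgHom
  σ_σ := involutive_invert
  X := T 1
  Xinv := T (-1)
  X_mul_Xinv := by rw [← T_add, add_neg_cancel, T_zero]
  σ_X := invert_T 1
  isLeftRegular := by
    refine IsLeftCancelMulZero.mul_left_cancel_of_ne_zero ?_
    simpa [T_pow] using one_sub_C_mul_T_ne_zero (1 : R5) (k := 2) (by norm_num)
  adjoin_eq_top :=
    eq_top_of_T_mem (Algebra.subset_adjoin (by simp)) (Algebra.subset_adjoin (by simp))
  t := R5.u1h
  ti := R5.u1hi
  c := R5.v1h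
  ci := R5.v1hi
  t_mul_ti := R5.u1h_mul_u1hi
  c_mul_ci := R5.v1h_mul_v1hi

def datum : Fin 2 → DemazureLusztigData R5 L := ![datum0, datum1]

lemma datum_X (i : Fin 2) : (datum i).X = Xl i := by fin_cases i <;> rfl
lemma datum_t (i : Fin 2) : (datum i).t = uh i := by fin_cases i <;> rfl
lemma datum_ti (i : Fin 2) : (datum i).ti = uhi i := by fin_cases i <;> rfl
lemma datum_c (i : Fin 2) : (datum i).c = vh i := by fin_cases i <;> rfl
lemma datum_ci (i : Fin 2) : (datum i).ci = vhi i := by fin_cases i <;> rfl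

lemma eq_datum_σ {s : Fin 2 → Module.End R5 L} (hs : Sconds s) (i : Fin 2) :
    s i = (datum i).σ.toLinearMap := by
  fin_cases i
  · exact linearMap_ext fun m => (hs.2 m).trans (σ0_T m).symm
  · exact linearMap_ext fun m => (hs.1 m).trans (invert_T m).symm

lemma uconds_iff {s U : Fin 2 → Module.End R5 L} (hs : Sconds s) :
    Uconds s U ↔ ∀ i, U i = (datum i).U := by
  refine forall_congr' fun i => ?_
  simp only [eq_datum_σ hs, ← datum_X, AlgHom.toLinearMap_apply]
  rw [(datum i).forall_one_sub_X_sq_mul_eq_iff, LinearMap.ext_iff]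
  simp only [DemazureLusztigData.U_apply, datum_t, datum_ti, datum_c, datum_ci, C_eq_algebraMap]

lemma u'conds_iff {s U' : Fin 2 → Module.End R5 L} (hs : Sconds s) :
    U'conds s U' ↔ ∀ i, U' i = (datum i).U' := by
  refine forall_congr' fun i => ?_
  simp only [eq_datum_σ hs, ← datum_X, AlgHom.toLinearMap_apply]
  rw [(datum i).forall_one_sub_X_sq_mul_eq_iff, LinearMap.ext_iff]
  simp only [DemazureLusztigData.U'_apply, datum_t, datum_ti, datum_c, datum_ci, C_eq_algebraMap]

def Vhat : Fin 2 → Module.End R5 L := ![datum0.W, datum1.V]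

lemma hecke_Vhat (i : Fin 2) : (Vhat i - vh i • 1) * (Vhat i + vhi i • 1) = 0 := by
  fin_cases i
  · exact datum0.hecke_W
  · exact datum1.hecke_V

lemma hecke_datum_U (i : Fin 2) : ((datum i).U - uh i • 1) * ((datum i).U + uhi i • 1) = 0 := by
  rw [← datum_t, ← datum_ti]
  exact (datum i).hecke_U

lemma datum1_Xinv_mul_datum0_Xinv : datum1.Xinv * datum0.Xinv = C R5.q4i := by
  show T (-1) * (C R5.q4i * T 1) = C R5.q4i
  rw [mul_left_comm, ← T_add, neg_add_cancel, T_zero, mul_one]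

lemma q4_smul_Vhat_mul_Vhat_mul_U_mul_U :
    R5.q4 • (Vhat 1 * Vhat 0 * datum0.U * datum1.U) = 1 := by
  refine LinearMap.ext fun f => ?_
  simp only [LinearMap.smul_apply, Module.End.mul_apply, Module.End.one_apply, Vhat,
    Matrix.cons_val_zero, Matrix.cons_val_one]
  rw [DemazureLusztigData.W_apply, DemazureLusztigData.U'_U, DemazureLusztigData.V_apply,
    ← mul_assoc, datum1_Xinv_mul_datum0_Xinv, ← smul_eq_C_mul, map_smul,
    DemazureLusztigData.U'_U, smul_smul, R5.q4_mul_q4i, one_smul]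

lemma apply_XX {Φ : H →ₐ[R5] Module.End R5 L} (hU1 : Φ H.U1 = datum1.U) (hV1 : Φ H.V1 = datum1.V) :
    Φ H.XX = LinearMap.mulLeft R5 (T 1) := by
  refine left_inv_eq_right_inv ?_ datum1.mulLeft_Xinv_mul_mulLeft_X
  calc Φ H.XX * LinearMap.mulLeft R5 datum1.Xinv = Φ H.XX * Φ H.XXi := by
        rw [← datum1.U_mul_V, H.XXi, map_mul Φ H.U1, hU1, hV1]
    _ = 1 := by rw [← map_mul, H.XX_mul_XXi, map_one]

/-- the Demazure–Lusztig operators are well defined on `L`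
(`f − s_i(f)` is divisible by `1 − 𝕏_i²`, with a unique quotient), satisfy the Hecke
relations, `Û_i'` is a two-sided inverse of `Û_i`, the operators
`V̂₁(f) = Û₁'(𝕏⁻¹·f)`, `V̂₀(f) = q^{−1/4}·𝕏·Û₀'(f)` satisfy the `C∨C₁` relations
including `q^{1/4}·V̂₁∘V̂₀∘Û₀∘Û₁ = id`, and consequently there is an `R`-algebra
homomorphism `H → End_R(L)` with `U_i ↦ Û_i`, `V_i ↦ V̂_i`, under which
`𝕏 = V₁⁻¹·U₁⁻¹` acts as multiplication by `𝕏`. -/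
theorem statement14 :
    ∀ s : Fin 2 → Module.End R5 L, Sconds s →
      (∀ (i : Fin 2) (f : L), ∃! g : L, (1 - Xl i ^ 2) * g = f - s i f) ∧
      (∃ U U' : Fin 2 → Module.End R5 L, Uconds s U ∧ U'conds s U') ∧
      ∀ U U' : Fin 2 → Module.End R5 L, Uconds s U → U'conds s U' →
        (∀ i : Fin 2, (U i - uh i • 1) * (U i + uhi i • 1) = 0) ∧
        (∀ i : Fin 2, U' i * U i = 1 ∧ U i * U' i = 1) ∧
        ∀ Vop : Fin 2 → Module.End R5 L,
          (∀ f : L, Vop 1 f = U' 1 (LaurentPolynomial.T (-1) * f)) →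
          (∀ f : L, Vop 0 f =
            LaurentPolynomial.C R5.q4i * LaurentPolynomial.T 1 * U' 0 f) →
          (∀ i : Fin 2, (Vop i - vh i • 1) * (Vop i + vhi i • 1) = 0) ∧
          R5.q4 • (Vop 1 * Vop 0 * U 0 * U 1) = 1 ∧
          ∃ Φ : H →ₐ[R5] Module.End R5 L,
            Φ H.U0 = U 0 ∧ Φ H.U1 = U 1 ∧ Φ H.V0 = Vop 0 ∧ Φ H.V1 = Vop 1 ∧
            ∀ f : L, Φ H.XX f = LaurentPolynomial.T 1 * f := by
  intro s hs
  refine ⟨fun i f => ?_, ⟨_, _, (uconds_iff hs).2 fun _ => rfl, (u'conds_iff hs).2 fun _ => rfl⟩,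
    fun U U' hU hU' => ?_⟩
  · rw [eq_datum_σ hs, ← datum_X]
    exact (datum i).existsUnique_δ f
  obtain rfl : U = fun i => (datum i).U := funext ((uconds_iff hs).1 hU)
  obtain rfl : U' = fun i => (datum i).U' := funext ((u'conds_iff hs).1 hU')
  refine ⟨hecke_datum_U, fun i => ⟨(datum i).U'_mul_U, (datum i).U_mul_U'⟩, fun Vop hV1 hV0 => ?_⟩
  obtain rfl : Vop = Vhat := by
    ext i : 1
    fin_cases i
    · exact LinearMap.ext hV0
    · exact LinearMap.ext hV1
  obtain ⟨Φ, hΦU0, hΦU1, hΦV0, hΦV1⟩ := H.exists_algHom (B := Module.End R5 L) _ _ _ _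
    (hecke_datum_U 0) (hecke_datum_U 1) (hecke_Vhat 0) (hecke_Vhat 1)
    q4_smul_Vhat_mul_Vhat_mul_U_mul_U
  exact ⟨hecke_Vhat, q4_smul_Vhat_mul_Vhat_mul_U_mul_U, Φ, hΦU0, hΦU1, hΦV0, hΦV1,
    fun f => by rw [apply_XX hΦU1 hΦV1]; rfl⟩
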